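/- In a vector lattice X with x₀ ∈ X, if x ∨ y ∼_{x₀} 0 and x ∧ y ∼_{x₀} 0, then x ∼_{x₀} y. -/
import Mathlib

def VLperp {X : Type*} [Lattice X] [AddCommGroup X] (u v : X) : Prop :=
  abs (abs u - abs v) = abs u + abs v

def VLsim {X : Type*} [Lattice X] [AddCommGroup X] (x₀ x y : X) : Prop :=
  VLperp (x - y) x₀

section Aux
variable {X : Type*} [Lattice X] [AddCommGroup X]
    [CovariantClass X X (· + ·) (· ≤ ·)]

lemma VLperp_iff_inf (u v : X) : VLperp u v ↔ |u| ⊓ |v| = 0 := by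
  unfold VLperp
  have habs : |u| ⊔ |v| - |u| ⊓ |v| = |(|u| - |v|)| := by
    have := sup_sub_inf_eq_abs_sub |v| |u|
    rwa [sup_comm, inf_comm] at this
  have hsum : |u| ⊓ |v| + (|u| ⊔ |v|) = |u| + |v| := inf_add_sup _ _
  constructor
  · intro h
    set z := |u| ⊓ |v| with hz
    have h2 : |u| ⊔ |v| - z = z + (|u| ⊔ |v|) := by rw [habs, h, ← hsum]
    have hzz : z + z = 0 := by
      have : z + z = (z + (|u| ⊔ |v|)) - (|u| ⊔ |v| - z) := by abel
      rw [← h2, sub_self] at this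
      exact this
    have hz0 : 0 ≤ z := le_inf (abs_nonneg u) (abs_nonneg v)
    have : z ≤ z + z := le_add_of_nonneg_left hz0
    rw [hzz] at this
    exact le_antisymm this hz0
  · intro h
    rw [← habs, h, sub_zero, ← hsum, h, zero_add]

lemma inf_add_le (a b c : X) (ha : 0 ≤ a) (hb : 0 ≤ b) (hc : 0 ≤ c) :
    (a + b) ⊓ c ≤ a ⊓ c + b ⊓ c := by
  have hdist : a ⊓ c + b ⊓ c = ((a + b) ⊓ (a + c)) ⊓ ((c + b) ⊓ (c + c)) := by
    rw [inf_add, add_inf, add_inf]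
  rw [hdist]
  refine le_inf (le_inf inf_le_left ?_) (le_inf ?_ ?_)
  · exact inf_le_right.trans (le_add_of_nonneg_left ha)
  · exact inf_le_right.trans (le_add_of_nonneg_right hb)
  · exact inf_le_right.trans (le_add_of_nonneg_left hc)

end Aux

theorem strong_relation_sup_inf_zero {X : Type*} [Lattice X] [AddCommGroup X]
    [CovariantClass X X (· + ·) (· ≤ ·)] [Module ℝ X] [PosSMulMono ℝ X]
    (x₀ x y : X) (h1 : VLsim x₀ (x ⊔ y) 0) (h2 : VLsim x₀ (x ⊓ y) 0) :
    VLsim x₀ x y := by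
  unfold VLsim at *
  rw [sub_zero] at h1 h2
  rw [VLperp_iff_inf] at h1 h2 ⊢
  have hle : |x - y| ≤ |x ⊔ y| + |x ⊓ y| := by
    have h3 : (y ⊔ x) - (y ⊓ x) = |x - y| := sup_sub_inf_eq_abs_sub y x
    rw [sup_comm, inf_comm] at h3
    rw [← h3]
    have h4 : x ⊔ y ≤ |x ⊔ y| := le_abs_self _
    have h5 : -|x ⊓ y| ≤ x ⊓ y := neg_le.mp (neg_le_abs _)
    calc (x ⊔ y) - (x ⊓ y) ≤ |x ⊔ y| - (x ⊓ y) := by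
          exact sub_le_sub_right h4 _
      _ ≤ |x ⊔ y| - (-|x ⊓ y|) := by exact sub_le_sub_left h5 _
      _ = |x ⊔ y| + |x ⊓ y| := by abel
  have key : |x - y| ⊓ |x₀| ≤ 0 := by
    calc |x - y| ⊓ |x₀| ≤ (|x ⊔ y| + |x ⊓ y|) ⊓ |x₀| :=
          inf_le_inf_right _ hle
      _ ≤ |x ⊔ y| ⊓ |x₀| + |x ⊓ y| ⊓ |x₀| :=
          inf_add_le _ _ _ (abs_nonneg _) (abs_nonneg _) (abs_nonneg _)
      _ = 0 := by rw [h1, h2, add_zero]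
  exact le_antisymm key (le_inf (abs_nonneg _) (abs_nonneg _))
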